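/- arXiv:2004.04183 — 2 statements merged into one kernel-verified Lean document; each statement's English description precedes it below -/
import Mathlib

section
/- For any bundle π : E → B, the Dirichlet extent functor D : Setᵒᵖ → Set defined by D(X) = Σ_{b ∈ B} (X → π⁻¹(b)) sends connected colimits of sets to connected limits; i.e., D preserves connected limits as a functor from Setᵒᵖ. -/
/-!
The Dirichlet functor is the pointwise coproduct `Σ b, yoneda (π⁻¹ b)` of representables, and
representables preserve all limits. So it suffices that coproducts of set-valued functors commute
with connected limits: in a compatible family of elements of `Σ i, G i j`, every transition map
preserves the index `i`, so over a connected `J` the index is constant and the family is a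
compatible family of a single `G i`.
-/

open CategoryTheory CategoryTheory.Limits Opposite

universe u

/-- The fiber `π⁻¹(b)` of a bundle `π : E → B` over `b ∈ B`. -/
def fiber (π : Arrow (Type u)) (b : π.right) : Type u := { e : π.left // π.hom e = b }

/-- The Dirichlet functor `X ↦ Σ (b : B), (X → π⁻¹ b)` of a bundle `π : E → B`. -/
def ext (π : Arrow (Type u)) : (Type u)ᵒᵖ ⥤ Type u where
  obj X := Σ b : π.right, X.unop → fiber π b
  map g := TypeCat.ofHom fun s => ⟨s.1, fun y => s.2 (g.unop y)⟩

namespace CategoryTheory.Functor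

universe v w w' u'

variable {C : Type u'} [Category.{v} C] {ι : Type w'}

def sigma (F : ι → C ⥤ Type w) : C ⥤ Type (max w' w) where
  obj X := Σ i, (F i).obj X
  map f := TypeCat.ofHom fun s => ⟨s.1, (F s.1).map f s.2⟩

@[simp]
lemma sigma_map_apply (F : ι → C ⥤ Type w) {X Y : C} (f : X ⟶ Y) (i : ι) (x : (F i).obj X) :
    (sigma F).map f ⟨i, x⟩ = ⟨i, (F i).map f x⟩ := rfl

variable {J : Type*} [Category J]

def sigmaSections (G : ι → J ⥤ Type w) (s : Σ i, (G i).sections) : (sigma G).sections :=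
  ⟨fun j => ⟨s.1, s.2.1 j⟩, fun f => congrArg (Sigma.mk s.1) (s.2.2 f)⟩

theorem sigmaSections_injective [Nonempty J] (G : ι → J ⥤ Type w) :
    Function.Injective (sigmaSections G) := by
  rintro ⟨i, s⟩ ⟨i', s'⟩ h
  have hj (j : J) : (⟨i, s.1 j⟩ : (sigma G).obj j) = ⟨i', s'.1 j⟩ := congrArg (·.1 j) h
  obtain ⟨j₀⟩ := ‹Nonempty J›
  obtain rfl : i = i' := (Sigma.mk.inj_iff.mp (hj j₀)).1
  exact congrArg _ (Subtype.ext (funext fun j => eq_of_heq (Sigma.mk.inj_iff.mp (hj j)).2))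

theorem sigmaSections_surjective [IsConnected J] (G : ι → J ⥤ Type w) :
    Function.Surjective (sigmaSections G) := by
  intro s
  obtain ⟨j₀⟩ := IsConnected.is_nonempty (J := J)
  have hconst : ∀ j, (s.1 j).1 = (s.1 j₀).1 := fun j =>
    constant_of_preserves_morphisms (fun j => (s.1 j).1)
      (fun _ _ f => congrArg Sigma.fst (s.2 f)) j j₀
  have hlift (j : J) : ∃ x, s.1 j = ⟨(s.1 j₀).1, x⟩ := by
    rw [← hconst j]
    exact ⟨_, rfl⟩
  choose t ht using hlift
  have hcompat {j j' : J} (f : j ⟶ j') :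
      (⟨(s.1 j₀).1, (G _).map f (t j)⟩ : (sigma G).obj j') = ⟨_, t j'⟩ := by
    rw [← sigma_map_apply, ← ht, ← ht]
    exact s.2 f
  exact ⟨⟨_, t, fun f => eq_of_heq (Sigma.mk.inj_iff.mp (hcompat f)).2⟩,
    Subtype.ext (funext fun j => (ht j).symm)⟩

theorem sectionOfCone_mapCone_sigma (F : ι → C ⥤ Type w) {K : J ⥤ C} (c : Cone K) :
    Types.sectionOfCone ((sigma F).mapCone c) =
      sigmaSections (fun i => K ⋙ F i) ∘
        _root_.Sigma.map _root_.id fun i => Types.sectionOfCone ((F i).mapCone c) :=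
  rfl

instance preservesLimitsOfShape_sigma [IsConnected J] (F : ι → C ⥤ Type w)
    [∀ i, PreservesLimitsOfShape J (F i)] :
    PreservesLimitsOfShape J (sigma F) where
  preservesLimit {K} := ⟨fun {c} hc => by
    have hF (i : ι) :=
      (Types.isLimit_iff_bijective_sectionOfCone _).mp ⟨isLimitOfPreserves (F i) hc⟩
    refine (Types.isLimit_iff_bijective_sectionOfCone _).mpr ?_
    rw [sectionOfCone_mapCone_sigma]
    exact ⟨(sigmaSections_injective _).comp (Function.injective_id.sigma_map fun i => (hF i).1),
      (sigmaSections_surjective _).comp (Function.surjective_id.sigma_map fun i => (hF i).2)⟩⟩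

end CategoryTheory.Functor

def extIsoSigmaYoneda (π : Arrow (Type u)) :
    ext π ≅ Functor.sigma fun b => yoneda.obj (fiber π b) :=
  NatIso.ofComponents (fun _ => (Equiv.sigmaCongrRight fun _ => TypeCat.homEquiv.symm).toIso)
    fun _ => rfl

/-- For any bundle `π : E → B`, the Dirichlet extent
`D(X) = Σ (b : B), (X → π⁻¹ b)` preserves connected limits as a functor from
`Setᵒᵖ` (equivalently, it sends connected colimits of sets to connected
limits). -/
theorem ext_preserves_connected_limits (π : Arrow (Type u)) :
    ∀ (J : Type u) [SmallCategory J] [IsConnected J],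
      Nonempty (PreservesLimitsOfShape J (ext π)) :=
  fun _ _ _ => ⟨preservesLimitsOfShape_of_natIso (extIsoSigmaYoneda π).symm⟩
end

section
/- Let D : Setᵒᵖ → Set be a functor that preserves connected limits (i.e., sends connected colimits in Set to limits in Set). Then D is naturally isomorphic to the Dirichlet extent of the bundle D(!_0) : D(1) → D(0), where !_0 : ∅ → 1; concretely, D(X) ≅ Σ_{b ∈ D(1)} (X → fiber of D(!_0) over b) naturally in X. -/
open CategoryTheory CategoryTheory.Limits Opposite

universe u

/-- The unique map `!_0 : ∅ → 1`. -/
def bangZero : PEmpty.{u + 1} ⟶ PUnit.{u + 1} := TypeCat.ofHom fun e => e.elim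

/-!
A set `X` is the wide pushout of `X` copies of `!₀ : ∅ → 1`, with legs the points `1 → X`; as
`WidePullbackShape X` is connected, `D` turns this into a wide pullback of `X` copies of
`D(!₀) : D(1) → D(0)`. That wide pullback is `Σ (b : D 0), (X → D(!₀)⁻¹ b)` on the nose, and the
comparison map restricts `d : D X` along `∅ → X` and along every point of `X`.
-/

namespace Dirichlet

open WidePullbackShape

lemma sigma_fiber_ext {π : Arrow (Type u)} {X : Type u} {s t : Σ b : π.right, X → fiber π b}
    (h₁ : s.1 = t.1) (h₂ : ∀ x, (s.2 x).1 = (t.2 x).1) : s = t := by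
  obtain ⟨b, f⟩ := s
  obtain ⟨_, g⟩ := t
  subst h₁
  obtain rfl : f = g := funext fun x => Subtype.ext (h₂ x)
  rfl

def extCone (π : Arrow (Type u)) (X : Type u) :
    Cone (wideCospan π.right (fun _ : X => π.left) (fun _ => π.hom)) :=
  mkCone (X := (ext π).obj (op X)) (TypeCat.ofHom fun s => s.1)
    (fun x => TypeCat.ofHom fun s => (s.2 x).1)
    (fun x => ConcreteCategory.hom_ext _ _ fun s => (s.2 x).2)

def isLimitExtCone (π : Arrow (Type u)) (X : Type u) : IsLimit (extCone π X) where
  lift s := TypeCat.ofHom fun w =>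
    ⟨s.π.app none w, fun x => ⟨s.π.app (some x) w, types_congr_hom (s.w (Hom.term x)) w⟩⟩
  fac s j := by rcases j with _ | x <;> rfl
  uniq s m hm := ConcreteCategory.hom_ext _ _ fun w =>
    sigma_fiber_ext (types_congr_hom (hm none) w) fun x => types_congr_hom (hm (some x)) w

def pointsCone (X : Type u) :
    Cone (wideCospan (op PEmpty.{u + 1}) (fun _ : X => op PUnit.{u + 1}) (fun _ => bangZero.op)) :=
  mkCone (X := op X) (TypeCat.ofHom PEmpty.elim).op (fun x => (homOfElement x).op)
    (fun _ => Quiver.Hom.unop_inj (Types.isInitialPEmpty.hom_ext _ _))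

def isLimitPointsCone (X : Type u) : IsLimit (pointsCone X) where
  lift s := (TypeCat.ofHom fun x => (s.π.app (some x)).unop PUnit.unit).op
  fac s j := by
    rcases j with _ | x
    · exact Quiver.Hom.unop_inj (Types.isInitialPEmpty.hom_ext _ _)
    · exact Quiver.Hom.unop_inj (ConcreteCategory.hom_ext _ _ fun _ => rfl)
  uniq s m hm := Quiver.Hom.unop_inj <| ConcreteCategory.hom_ext _ _ fun x =>
    types_congr_hom (congrArg Quiver.Hom.unop (hm (some x))) PUnit.unit

variable (D : (Type u)ᵒᵖ ⥤ Type u)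

def toExt : D ⟶ ext (Arrow.mk (D.map bangZero.{u}.op)) where
  app X := TypeCat.ofHom fun d =>
    ⟨D.map (TypeCat.ofHom PEmpty.elim).op d, fun x => ⟨D.map (homOfElement x).op d,
      types_congr_hom ((D.mapCone (pointsCone X.unop)).w (Hom.term x)) d⟩⟩
  naturality X Y g := by
    refine ConcreteCategory.hom_ext _ _ fun d => sigma_fiber_ext ?_ fun y => ?_
    · change D.map _ (D.map g d) = D.map _ d
      rw [← Functor.map_comp_apply]
      congr 3
      exact Quiver.Hom.unop_inj (Types.isInitialPEmpty.hom_ext _ _)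
    · change D.map _ (D.map g d) = D.map _ d
      rw [← Functor.map_comp_apply]
      rfl

lemma isIso_toExt_app (X : Type u) [PreservesLimitsOfShape (WidePullbackShape X) D] :
    IsIso ((toExt D).app (op X)) := by
  have hlim := (IsLimit.postcomposeHomEquiv (diagramIsoWideCospan _) _).symm
    (isLimitOfPreserves D (isLimitPointsCone X))
  -- `(toExt D).app (op X)` is, definitionally, the lift of this limit cone to `extCone`
  exact (isLimitExtCone (Arrow.mk (D.map bangZero.op)) X).nonempty_isLimit_iff_isIso_lift.mp
    ⟨hlim⟩

end Dirichlet

/-- If `D : Setᵒᵖ → Set` preserves connected limits (i.e. sends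
connected colimits in `Set` to limits in `Set`), then `D` is naturally
isomorphic to the Dirichlet extent of the bundle `D(!_0) : D(1) → D(0)`;
concretely, `D(X) ≅ Σ (b : D 1), (X → D(!_0)⁻¹ b)` naturally in `X`. -/
theorem dirichlet_iso_ext_of_preserves_connected_limits
    (D : (Type u)ᵒᵖ ⥤ Type u)
    (hD : ∀ (J : Type u) [SmallCategory J] [IsConnected J],
      Nonempty (PreservesLimitsOfShape J D)) :
    Nonempty (D ≅ ext (Arrow.mk (D.map bangZero.{u}.op))) := by
  have (X : (Type u)ᵒᵖ) : IsIso ((Dirichlet.toExt D).app X) :=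
    have := (hD (WidePullbackShape X.unop)).some
    Dirichlet.isIso_toExt_app D X.unop
  have := NatIso.isIso_of_isIso_app (Dirichlet.toExt D)
  exact ⟨asIso (Dirichlet.toExt D)⟩
end
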